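/- arXiv:2602.14972 — 4 statements merged into one kernel-verified Lean document; each statement's English description precedes it below -/
import Mathlib

section
/- Let R and S be relations on the finite type Fin K, both having irreflexive transitive closure (i.e. both encoding DAGs). Suppose R and S have the same skeleton, i.e. for all i j, (R i j ∨ R j i) ↔ (S i j ∨ S j i), and the same ancestor relation, i.e. Relation.TransGen R = Relation.TransGen S. Then R = S. (Knowing the skeleton of the ground-truth causal DAG, checking for all pairs (i, j) whether z_i is an ancestor of z_j yields all edge orientations, so ancestor information determines the DAG given its skeleton.) -/
/-! In a relation whose transitive closure is irreflexive, no edge `i → j` can be reversed by a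
path `j → ⋯ → i`. So if two such relations have the same transitive closure, an edge of one
cannot appear reversed in the other, and a common skeleton forces the same orientation. -/

namespace Relation

variable {α : Type*} {R S : α → α → Prop}

theorem TransGen.not_reverse_of_irreflexive (hR : Irreflexive (TransGen R)) {i j : α}
    (hij : R i j) : ¬ TransGen R j i :=
  fun hji => hR i ((TransGen.single hij).trans hji)

theorem rel_of_rel_of_transGen_eq (hR : Irreflexive (TransGen R))
    (hanc : TransGen R = TransGen S) {i j : α} (hskel : S i j ∨ S j i) (hij : R i j) :
    S i j :=
  hskel.resolve_right fun hji =>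
    TransGen.not_reverse_of_irreflexive hR hij (hanc ▸ TransGen.single hji)

end Relation

open Relation in
theorem dag_determined_by_skeleton_and_ancestors_general {K : ℕ}
    (R S : Fin K → Fin K → Prop)
    (hR : Irreflexive (Relation.TransGen R))
    (hskel : ∀ i j, (R i j ∨ R j i) ↔ (S i j ∨ S j i))
    (hanc : Relation.TransGen R = Relation.TransGen S) :
    R = S := by
  have hS : Irreflexive (TransGen S) := hanc ▸ hR
  funext i j
  exact propext
    ⟨fun h => rel_of_rel_of_transGen_eq hR hanc ((hskel i j).mp (Or.inl h)) h,
     fun h => rel_of_rel_of_transGen_eq hS hanc.symm ((hskel i j).mpr (Or.inl h)) h⟩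

/-- Two DAGs on `Fin K` (relations with irreflexive transitive closure) with the same
skeleton and the same ancestor relation (transitive closure) are equal: ancestor
information determines all edge orientations given the skeleton. -/
theorem dag_determined_by_skeleton_and_ancestors {K : ℕ}
    (R S : Fin K → Fin K → Prop)
    (hR : Irreflexive (Relation.TransGen R))
    (hS : Irreflexive (Relation.TransGen S))
    (hskel : ∀ i j, (R i j ∨ R j i) ↔ (S i j ∨ S j i))
    (hanc : Relation.TransGen R = Relation.TransGen S) :
    R = S :=
  dag_determined_by_skeleton_and_ancestors_general R S hR hskel hanc
end

section
/- Let (Ω, 𝓕, P) be a probability space which is a standard Borel space equipped with a probability measure. Let 𝒳 and E be measurable spaces, and let X : Ω → 𝒳, ε : Ω → E, Y₀ : Ω → ℝ, Y₁ : Ω → ℝ be measurable maps. Assume the map ω ↦ ε ω is independent of the map ω ↦ (X ω, Y₀ ω, Y₁ ω) (jointly, under P). Let g : 𝒳 × E → ℝ be measurable and define the treatment T : Ω → ℝ by T ω = g (X ω, ε ω). Then the σ-algebra generated by (Y₀, Y₁) and the σ-algebra generated by T are conditionally independent given the σ-algebra generated by X: (Y₀, Y₁) ⟂⟂ T ∣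 X. (This is the unconfoundedness conclusion of Proposition 1: when all common causes of the treatment and the potential outcomes are contained in the observed covariates X and the remaining source of variation in T is exogenous noise ε, treatment assignment is conditionally independent of the potential outcomes given X.) -/
open MeasureTheory ProbabilityTheory MeasurableSpace

/-- Key lemma: if `σ(ε)` is independent of `mW`, `m' ≤ mW`, then conditioning on `m'`,
the event `ε ⁻¹' C` factors out with a constant. -/
lemma condexp_inter_preimage_eq_smul
    {Ω E : Type*} {m' mW : MeasurableSpace Ω} [mΩ : MeasurableSpace Ω]
    [MeasurableSpace E]
    (P : Measure Ω) [IsProbabilityMeasure P]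
    (hm' : m' ≤ mΩ) (hWle : mW ≤ mΩ) (hm'W : m' ≤ mW)
    (ε : Ω → E) (hε : Measurable ε)
    (hindep : Indep (MeasurableSpace.comap ε inferInstance) mW P)
    {s : Set Ω} (hs : MeasurableSet[mW] s) {C : Set E} (hC : MeasurableSet C) :
    (fun ω => (P (ε ⁻¹' C)).toReal * (P⟦s | m'⟧) ω) =ᵐ[P] P⟦s ∩ ε ⁻¹' C | m'⟧ := by
  have hsΩ : MeasurableSet s := hWle _ hs
  have hCΩ : MeasurableSet (ε ⁻¹' C) := hε hC
  have hkey := (Indep_iff _ _ _).mp hindep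
  refine ae_eq_condExp_of_forall_setIntegral_eq (μ := P)
    (f := (s ∩ ε ⁻¹' C).indicator (fun _ => (1:ℝ)))
    (g := fun ω => (P (ε ⁻¹' C)).toReal * (P⟦s | m'⟧) ω) hm' ?_ ?_ ?_ ?_
  · exact (integrable_const (1:ℝ)).indicator (hsΩ.inter hCΩ)
  · intro u hu _
    exact (integrable_condExp.const_mul _).integrableOn
  · intro u hu _
    have huΩ : MeasurableSet u := hm' _ hu
    rw [integral_const_mul, setIntegral_condExp hm' ((integrable_const (1:ℝ)).indicator hsΩ) hu,
      setIntegral_indicator hsΩ, setIntegral_indicator (hsΩ.inter hCΩ),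
      setIntegral_const, setIntegral_const]
    simp only [smul_eq_mul, mul_one]
    simp only [Measure.real]
    rw [← ENNReal.toReal_mul]
    congr 1
    have : u ∩ (s ∩ ε ⁻¹' C) = ε ⁻¹' C ∩ (u ∩ s) := by
      ext ω; simp [Set.mem_inter_iff]; tauto
    rw [this, hkey (ε ⁻¹' C) (u ∩ s) ⟨C, hC, rfl⟩ ((hm'W _ hu).inter hs), mul_comm]
  · exact ((stronglyMeasurable_condExp (m := m')).const_mul _).aestronglyMeasurable


/-- Pull out an `m'`-measurable set from a conditional probability. -/
lemma condexp_inter_of_measurable_left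
    {Ω : Type*} {m' : MeasurableSpace Ω} [mΩ : MeasurableSpace Ω]
    (P : Measure Ω) [IsProbabilityMeasure P] (hm' : m' ≤ mΩ)
    {s a : Set Ω} (hs : MeasurableSet s) (ha : MeasurableSet[m'] a) :
    P⟦s ∩ a | m'⟧ =ᵐ[P] P⟦s | m'⟧ * P⟦a | m'⟧ := by
  have hInd : ((s ∩ a).indicator (fun _ => (1:ℝ)))
      = a.indicator (s.indicator (fun _ => (1:ℝ))) := by
    rw [Set.indicator_indicator, Set.inter_comm]
  have h3 : P⟦s ∩ a | m'⟧ =ᵐ[P] a.indicator (P⟦s | m'⟧) := by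
    rw [hInd]
    exact condExp_indicator ((integrable_const (1:ℝ)).indicator hs) ha
  have h4 : P⟦a | m'⟧ = a.indicator (fun _ => (1:ℝ)) :=
    condExp_of_stronglyMeasurable hm'
      (stronglyMeasurable_const.indicator ha)
      ((integrable_const (1:ℝ)).indicator (hm' _ ha))
  filter_upwards [h3] with ω h3
  rw [h3, Pi.mul_apply, h4]
  by_cases hω : ω ∈ a
  · simp [Set.indicator_of_mem hω]
  · simp [Set.indicator_of_notMem hω]

/-- Main computation: conditionally on `m'`, a `mW`-measurable set is independent of
`a ∩ ε ⁻¹' C` where `a` is `m'`-measurable and `ε` is independent of `mW`. -/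
lemma condexp_mul_of_indep
    {Ω E : Type*} {m' mW : MeasurableSpace Ω} [mΩ : MeasurableSpace Ω]
    [MeasurableSpace E]
    (P : Measure Ω) [IsProbabilityMeasure P]
    (hm' : m' ≤ mΩ) (hWle : mW ≤ mΩ) (hm'W : m' ≤ mW)
    (ε : Ω → E) (hε : Measurable ε)
    (hindep : Indep (MeasurableSpace.comap ε inferInstance) mW P)
    {s a : Set Ω} (hsW : MeasurableSet[mW] s) (ha : MeasurableSet[m'] a)
    {C : Set E} (hC : MeasurableSet C) :
    P⟦s ∩ (a ∩ ε ⁻¹' C) | m'⟧ =ᵐ[P] P⟦s | m'⟧ * P⟦a ∩ ε ⁻¹' C | m'⟧ := by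
  have haW : MeasurableSet[mW] a := hm'W _ ha
  have h1 := condexp_inter_preimage_eq_smul P hm' hWle hm'W ε hε hindep (hsW.inter haW) hC
  have h2 := condexp_inter_preimage_eq_smul P hm' hWle hm'W ε hε hindep haW hC
  have h3 := condexp_inter_of_measurable_left P hm' (hWle _ hsW) ha
  have hassoc : s ∩ (a ∩ ε ⁻¹' C) = (s ∩ a) ∩ ε ⁻¹' C := by rw [Set.inter_assoc]
  rw [hassoc]
  filter_upwards [h1, h2, h3] with ω h1 h2 h3
  rw [← h1, h3, Pi.mul_apply, Pi.mul_apply, ← h2]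
  ring

/-- Unconfoundedness from partial graph knowledge: if the exogenous noise `ε` is independent
of `(X, Y₀, Y₁)` and the treatment is `T = g (X, ε)`, then the potential outcomes `(Y₀, Y₁)`
and the treatment `T` are conditionally independent given the covariates `X`. -/
theorem unconfoundedness_of_exogenous_noise
    {Ω : Type*} [MeasurableSpace Ω] [StandardBorelSpace Ω]
    (P : Measure Ω) [IsProbabilityMeasure P]
    {𝒳 E : Type*} [MeasurableSpace 𝒳] [MeasurableSpace E]
    (X : Ω → 𝒳) (ε : Ω → E) (Y₀ Y₁ : Ω → ℝ)
    (hX : Measurable X) (hε : Measurable ε)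
    (hY₀ : Measurable Y₀) (hY₁ : Measurable Y₁)
    (hindep : IndepFun ε (fun ω => (X ω, Y₀ ω, Y₁ ω)) P)
    (g : 𝒳 × E → ℝ) (hg : Measurable g)
    (T : Ω → ℝ) (hT : ∀ ω, T ω = g (X ω, ε ω)) :
    CondIndep (MeasurableSpace.comap X inferInstance)
      (MeasurableSpace.comap (fun ω => (Y₀ ω, Y₁ ω)) inferInstance)
      (MeasurableSpace.comap T inferInstance)
      hX.comap_le P := by
  set W : Ω → 𝒳 × ℝ × ℝ := fun ω => (X ω, Y₀ ω, Y₁ ω) with hWdef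
  have hW : Measurable W := hX.prodMk (hY₀.prodMk hY₁)
  set Z : Ω → 𝒳 × E := fun ω => (X ω, ε ω) with hZdef
  have hZ : Measurable Z := hX.prodMk hε
  have hXW : (MeasurableSpace.comap X inferInstance) ≤ (MeasurableSpace.comap W inferInstance) := by
    rintro _ ⟨A, hA, rfl⟩
    refine ⟨A ×ˢ Set.univ, hA.prod MeasurableSet.univ, ?_⟩
    ext ω; simp [W]
  have hYW : (MeasurableSpace.comap (fun ω => (Y₀ ω, Y₁ ω)) inferInstance) ≤ (MeasurableSpace.comap W inferInstance) := by
    rintro _ ⟨B, hB, rfl⟩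
    refine ⟨Set.univ ×ˢ B, MeasurableSet.univ.prod hB, ?_⟩
    ext ω; simp [W]
  have hI : Indep (MeasurableSpace.comap ε inferInstance) (MeasurableSpace.comap W inferInstance) P := hindep
  -- reduce to conditional independence with σ(X, ε) on the right
  have hTZ : MeasurableSpace.comap T inferInstance ≤ MeasurableSpace.comap Z inferInstance := by
    have hTg : T = g ∘ Z := funext hT
    rw [hTg, ← MeasurableSpace.comap_comp]
    exact MeasurableSpace.comap_mono hg.comap_le
  refine condIndep_of_condIndep_of_le_right ?_ hTZ
  -- π-system argument
  set R : Set (Set (𝒳 × E)) :=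
    Set.image2 (· ×ˢ ·) { A : Set 𝒳 | MeasurableSet A } { C : Set E | MeasurableSet C } with hR
  set p2 : Set (Set Ω) := { s | ∃ t ∈ R, Z ⁻¹' t = s } with hp2def
  have hpm2 : MeasurableSpace.comap Z inferInstance = MeasurableSpace.generateFrom p2 := by
    conv_lhs => rw [show (inferInstance : MeasurableSpace (𝒳 × E))
      = MeasurableSpace.generateFrom R from generateFrom_prod.symm]
    rw [MeasurableSpace.comap_generateFrom]
    rfl
  have h2m : ∀ t ∈ p2, MeasurableSet t := by
    rintro t ⟨u, hu, rfl⟩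
    refine hZ.comap_le _ ⟨u, ?_, rfl⟩
    obtain ⟨A, hA, C, hC, rfl⟩ := hu
    exact hA.prod hC
  refine CondIndepSets.condIndep (hY₀.prodMk hY₁).comap_le hZ.comap_le
    (p1 := { s | MeasurableSet[(MeasurableSpace.comap (fun ω => (Y₀ ω, Y₁ ω)) inferInstance)] s}) (p2 := p2)
    (@isPiSystem_measurableSet Ω (MeasurableSpace.comap (fun ω => (Y₀ ω, Y₁ ω)) inferInstance)) (isPiSystem_prod.comap Z)
    (@MeasurableSpace.generateFrom_measurableSet Ω (MeasurableSpace.comap (fun ω => (Y₀ ω, Y₁ ω)) inferInstance)).symm hpm2 ?_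
  · -- the CondIndepSets statement
    refine (condIndepSets_iff _ hX.comap_le
      { s | MeasurableSet[(MeasurableSpace.comap (fun ω => (Y₀ ω, Y₁ ω)) inferInstance :
          MeasurableSpace Ω)] s } p2
      (fun s hs => (hY₀.prodMk hY₁).comap_le _ hs) h2m P).mpr ?_
    rintro s t hs ⟨u, hu, rfl⟩
    obtain ⟨A, hA, C, hC, rfl⟩ := hu
    have htt : Z ⁻¹' (A ×ˢ C) = X ⁻¹' A ∩ ε ⁻¹' C := by ext ω; simp [Z]
    rw [htt]
    exact condexp_mul_of_indep P hX.comap_le hW.comap_le hXW ε hε hI (hYW _ hs)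
      ⟨A, hA, rfl⟩ hC
end

section
/- Let (Ω, 𝓕, P) be a probability space which is a standard Borel space equipped with a probability measure, let X : Ω → 𝒳 be measurable into a measurable space 𝒳, let Y₀, Y₁ : Ω → ℝ be integrable and let T : Ω → ℝ take values in {0, 1} and be measurable. Define the observed outcome Y = T · Y₁ + (1 − T) · Y₀ and assume Y is integrable together with Y·T and Y₁·T. Assume unconfoundedness: the σ-algebra generated by (Y₀, Y₁) and the σ-algebra generated by T are conditionally independent given the σ-algebra 𝓖 generated by X. Then P-almost surely, E[Y · T ∣ 𝓖] = E[Y₁ ∣ 𝓖] · E[T ∣ 𝓖] and E[Y · (1 − T) ∣ 𝓖] = E[Y₀ ∣ 𝓖] · E[(1 − T) ∣ 𝓖]. (Under unconfoundedness the conditional distribution of the unobserved potential outcomes is identified from observed data, so estimating the causal effect effectively becomes a predictive task.) -/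
open MeasureTheory ProbabilityTheory

/-- If `∫_B G = 0` for every `m₁`-measurable set `B`, and `G` is a.e. bounded, then
`∫ f·G = 0` for every integrable `m₁`-strongly-measurable `f`. -/
lemma integral_mul_eq_zero_of_forall_setIntegral_eq_zero
    {Ω : Type*} {m₁ mΩ : MeasurableSpace Ω} (hm₁ : m₁ ≤ mΩ)
    (μ : Measure Ω) [IsFiniteMeasure μ]
    (G : Ω → ℝ) (hG : AEStronglyMeasurable G μ) (C : ℝ)
    (hGb : ∀ᵐ ω ∂μ, ‖G ω‖ ≤ C)
    (hzero : ∀ B : Set Ω, MeasurableSet[m₁] B → ∫ ω in B, G ω ∂μ = 0)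
    {f : Ω → ℝ} (hf : StronglyMeasurable[m₁] f) (hfi : Integrable f μ) :
    ∫ ω, f ω * G ω ∂μ = 0 := by
  have hmulInt : ∀ {h : Ω → ℝ}, Integrable h μ → Integrable (fun ω => h ω * G ω) μ := by
    intro h hh
    have := Integrable.bdd_mul (f := G) (g := h) (c := C) hh hG hGb
    simpa [mul_comm] using this
  set ν := μ.trim hm₁ with hν
  have key : ∀ ⦃g : Ω → ℝ⦄, Integrable g ν → ∫ ω, g ω * G ω ∂μ = 0 := by
    refine @Integrable.induction Ω ℝ m₁ _ ν (fun g => ∫ ω, g ω * G ω ∂μ = 0) ?_ ?_ ?_ ?_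
    · intro c s hs _
      have : (fun ω => (s.indicator fun _ => c) ω * G ω)
          = s.indicator (fun ω => c * G ω) := by
        funext ω
        by_cases hω : ω ∈ s <;> simp [hω]
      rw [this, integral_indicator (hm₁ s hs)]
      rw [integral_const_mul, hzero s hs, mul_zero]
    · intro g h _ hgi hhi hg hh
      have hgμ : Integrable g μ := integrable_of_integrable_trim hm₁ hgi
      have hhμ : Integrable h μ := integrable_of_integrable_trim hm₁ hhi
      have : (fun ω => (g + h) ω * G ω) = fun ω => g ω * G ω + h ω * G ω := by
        funext ω; simp [add_mul]
      rw [this, integral_add (hmulInt hgμ) (hmulInt hhμ), hg, hh, add_zero]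
    · -- closedness in L¹(ν)
      have hcont : Continuous (fun g : Lp ℝ 1 ν => ∫ ω, g ω * G ω ∂μ) := by
        have hC : 0 ≤ max C 0 := le_max_right _ _
        refine LipschitzWith.continuous (K := ⟨max C 0, hC⟩) ?_
        refine LipschitzWith.of_dist_le_mul fun g h => ?_
        have hgμ : Integrable (g : Ω → ℝ) μ :=
          integrable_of_integrable_trim hm₁ (L1.integrable_coeFn g)
        have hhμ : Integrable (h : Ω → ℝ) μ :=
          integrable_of_integrable_trim hm₁ (L1.integrable_coeFn h)
        have hdiff : ∫ ω, (g : Ω → ℝ) ω * G ω ∂μ - ∫ ω, (h : Ω → ℝ) ω * G ω ∂μ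
            = ∫ ω, ((g : Ω → ℝ) ω - (h : Ω → ℝ) ω) * G ω ∂μ := by
          rw [← integral_sub (hmulInt hgμ) (hmulInt hhμ)]
          congr 1; funext ω; ring
        rw [Real.dist_eq, hdiff, ← Real.norm_eq_abs]
        have hbound : ∫ ω, ‖((g : Ω → ℝ) ω - (h : Ω → ℝ) ω) * G ω‖ ∂μ
            ≤ ∫ ω, (max C 0) * ‖(g : Ω → ℝ) ω - (h : Ω → ℝ) ω‖ ∂μ := by
          refine integral_mono_of_nonneg (Filter.Eventually.of_forall fun ω => norm_nonneg _)
            (((hgμ.sub hhμ).norm).const_mul _) ?_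
          filter_upwards [hGb] with ω hω
          rw [norm_mul]
          calc ‖(g : Ω → ℝ) ω - (h : Ω → ℝ) ω‖ * ‖G ω‖
              ≤ ‖(g : Ω → ℝ) ω - (h : Ω → ℝ) ω‖ * max C 0 :=
                mul_le_mul_of_nonneg_left (hω.trans (le_max_left _ _)) (norm_nonneg _)
            _ = max C 0 * ‖(g : Ω → ℝ) ω - (h : Ω → ℝ) ω‖ := mul_comm _ _
        calc ‖∫ ω, ((g : Ω → ℝ) ω - (h : Ω → ℝ) ω) * G ω ∂μ‖
            ≤ ∫ ω, ‖((g : Ω → ℝ) ω - (h : Ω → ℝ) ω) * G ω‖ ∂μ :=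
              norm_integral_le_integral_norm _
          _ ≤ ∫ ω, (max C 0) * ‖(g : Ω → ℝ) ω - (h : Ω → ℝ) ω‖ ∂μ := hbound
          _ = (max C 0) * ∫ ω, ‖(g : Ω → ℝ) ω - (h : Ω → ℝ) ω‖ ∂μ := integral_const_mul _ _
          _ = (max C 0) * dist g h := by
              congr 1
              have hsub : AEStronglyMeasurable[m₁] (fun ω => ‖(g : Ω → ℝ) ω - (h : Ω → ℝ) ω‖) ν :=
                ((Lp.aestronglyMeasurable g).sub (Lp.aestronglyMeasurable h)).norm
              rw [integral_trim_ae hm₁ hsub]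
              rw [L1.dist_eq_integral_dist]
              refine integral_congr_ae ?_
              filter_upwards [Lp.coeFn_sub g h] with ω hω
              simp [Real.dist_eq]
      exact IsClosed.preimage hcont (isClosed_singleton (x := (0:ℝ)))
    · intro g h hgh hgi hg
      have : g =ᵐ[μ] h := ae_eq_of_ae_eq_trim hgh
      rw [← hg]
      refine integral_congr_ae ?_
      filter_upwards [this] with ω hω
      rw [hω]
  exact key (hfi.trim hm₁ hf)

/-- Under conditional independence of `m₁` and `m₂` given `m'`, the conditional expectation of
`f · 1_A` factors, for `f` integrable `m₁`-measurable and `A ∈ m₂`. -/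
lemma condexp_mul_indicator_of_condIndep
    {Ω : Type*} {m' m₁ m₂ mΩ : MeasurableSpace Ω} [StandardBorelSpace Ω]
    (μ : Measure Ω) [IsProbabilityMeasure μ] (hm' : m' ≤ mΩ) (hm₁ : m₁ ≤ mΩ) (hm₂ : m₂ ≤ mΩ)
    (hind : CondIndep m' m₁ m₂ hm' μ)
    {f : Ω → ℝ} (hf : StronglyMeasurable[m₁] f) (hfi : Integrable f μ)
    {A : Set Ω} (hA : MeasurableSet[m₂] A) :
    (μ[fun ω => f ω * A.indicator (fun _ => (1:ℝ)) ω | m']) =ᵐ[μ]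
      fun ω => (μ[f | m']) ω * (μ[A.indicator (fun _ => (1:ℝ)) | m']) ω := by
  have hAm : MeasurableSet A := hm₂ A hA
  set I : Ω → ℝ := A.indicator (fun _ => (1:ℝ)) with hI
  set c : Ω → ℝ := μ[I | m'] with hc
  have hIi : Integrable I μ := (integrable_const (1:ℝ)).indicator hAm
  have hI_bd : ∀ ω, ‖I ω‖ ≤ 1 := by
    intro ω
    by_cases hω : ω ∈ A <;> simp [hI, hω]
  have hc_sm : StronglyMeasurable[m'] c := stronglyMeasurable_condExp
  have hc_asm : AEStronglyMeasurable c μ := (hc_sm.mono hm').aestronglyMeasurable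
  have hc0 : 0 ≤ᵐ[μ] c := condExp_nonneg (by
    refine Filter.Eventually.of_forall fun ω => ?_
    by_cases hω : ω ∈ A <;> simp [hI, hω])
  have hc1 : c ≤ᵐ[μ] fun _ => (1:ℝ) := by
    have h := condExp_mono (m := m') (μ := μ) hIi (integrable_const (1:ℝ))
      (Filter.Eventually.of_forall fun ω => by
        by_cases hω : ω ∈ A <;> simp [hI, hω])
    have hconst : μ[(fun _ => (1:ℝ)) | m'] = fun _ => (1:ℝ) := condExp_const hm' 1
    calc c ≤ᵐ[μ] μ[(fun _ => (1:ℝ)) | m'] := h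
    _ = fun _ => (1:ℝ) := hconst
  have hc_bd : ∀ᵐ ω ∂μ, ‖c ω‖ ≤ 1 := by
    filter_upwards [hc0, hc1] with ω h0 h1
    rw [Real.norm_eq_abs, abs_le]
    have h0' : (0:ℝ) ≤ c ω := h0
    exact ⟨by linarith, h1⟩
  -- conditional independence: product rule for indicators
  have hcond : ∀ B : Set Ω, MeasurableSet[m₁] B →
      (μ⟦B ∩ A | m'⟧) =ᵐ[μ] (μ⟦B | m'⟧) * (μ⟦A | m'⟧) :=
    fun B hB => ((condIndep_iff m' m₁ m₂ hm' hm₁ hm₂ μ).mp hind) B A hB hA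
  -- the crucial vanishing integrals
  have hzero : ∀ s : Set Ω, MeasurableSet[m'] s → ∀ B : Set Ω, MeasurableSet[m₁] B →
      ∫ ω in B, s.indicator (fun ω => I ω - c ω) ω ∂μ = 0 := by
    intro s hs B hB
    have hsm : MeasurableSet s := hm' s hs
    have hBm : MeasurableSet B := hm₁ B hB
    rw [setIntegral_indicator hsm]
    rw [integral_sub (hIi.integrableOn) (integrable_condExp.integrableOn)]
    have h1 : ∫ ω in B ∩ s, I ω ∂μ = (μ ((B ∩ s) ∩ A)).toReal := by
      rw [hI, setIntegral_indicator hAm]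
      simp [Measure.real_def]
    have h2 : ∫ ω in B ∩ s, c ω ∂μ = (μ ((B ∩ s) ∩ A)).toReal := by
      have e1 : ∫ ω in B ∩ s, c ω ∂μ = ∫ ω in s, B.indicator c ω ∂μ := by
        rw [setIntegral_indicator hBm, Set.inter_comm s B]
      have e2 : B.indicator c = fun ω => c ω * B.indicator (fun _ => (1:ℝ)) ω := by
        funext ω
        by_cases hω : ω ∈ B <;> simp [hω]
      have hBi : Integrable (B.indicator (fun _ => (1:ℝ))) μ :=
        (integrable_const (1:ℝ)).indicator hBm
      have hcB_int : Integrable (c * B.indicator (fun _ => (1:ℝ))) μ := by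
        exact Integrable.bdd_mul (c := 1) hBi hc_asm hc_bd
      have e3 : μ[c * B.indicator (fun _ => (1:ℝ)) | m'] =ᵐ[μ]
          c * μ[B.indicator (fun _ => (1:ℝ)) | m'] :=
        condExp_mul_of_stronglyMeasurable_left hc_sm hcB_int hBi
      have e4 : c * (μ⟦B | m'⟧) =ᵐ[μ] μ⟦B ∩ A | m'⟧ := by
        have := hcond B hB
        calc c * (μ⟦B | m'⟧) = (μ⟦B | m'⟧) * (μ⟦A | m'⟧) := mul_comm _ _
        _ =ᵐ[μ] μ⟦B ∩ A | m'⟧ := this.symm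
      calc ∫ ω in B ∩ s, c ω ∂μ
          = ∫ ω in s, B.indicator c ω ∂μ := e1
        _ = ∫ ω in s, (c * B.indicator (fun _ => (1:ℝ))) ω ∂μ := by rw [e2]; rfl
        _ = ∫ ω in s, (μ[c * B.indicator (fun _ => (1:ℝ)) | m']) ω ∂μ :=
            (setIntegral_condExp hm' hcB_int hs).symm
        _ = ∫ ω in s, (μ⟦B ∩ A | m'⟧) ω ∂μ := by
            refine integral_congr_ae (ae_restrict_of_ae ?_)
            filter_upwards [e3, e4] with ω h3 h4
            rw [h3]
            exact h4
        _ = ∫ ω in s, (B ∩ A).indicator (fun _ => (1:ℝ)) ω ∂μ :=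
            setIntegral_condExp hm' ((integrable_const (1:ℝ)).indicator (hBm.inter hAm)) hs
        _ = (μ (s ∩ (B ∩ A))).toReal := by
            rw [setIntegral_indicator (hBm.inter hAm)]
            simp [Measure.real_def]
        _ = (μ ((B ∩ s) ∩ A)).toReal := by
            rw [Set.inter_comm B s, Set.inter_assoc]
      -- done
    rw [h1, h2, sub_self]
  -- integrability facts
  have hfI : Integrable (fun ω => f ω * I ω) μ := by
    have : (fun ω => f ω * I ω) = A.indicator f := by
      funext ω
      by_cases hω : ω ∈ A <;> simp [hI, hω]
    rw [this]; exact hfi.indicator hAm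
  have hcf_i : Integrable (c * f) μ := Integrable.bdd_mul (c := 1) hfi hc_asm hc_bd
  have hpull : μ[c * f | m'] =ᵐ[μ] c * μ[f | m'] :=
    condExp_mul_of_stronglyMeasurable_left hc_sm hcf_i hfi
  -- the candidate function
  set g : Ω → ℝ := fun ω => (μ[f | m']) ω * c ω with hg
  have hg_int : Integrable g μ := by
    have := Integrable.bdd_mul (c := 1) (integrable_condExp (f := f) (m := m') (μ := μ))
      hc_asm hc_bd
    simpa [hg, mul_comm] using this
  have hgm : AEStronglyMeasurable[m'] g μ :=
    (stronglyMeasurable_condExp.mul stronglyMeasurable_condExp).aestronglyMeasurable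
  have hg_eq : ∀ s : Set Ω, MeasurableSet[m'] s → μ s < ⊤ →
      ∫ ω in s, g ω ∂μ = ∫ ω in s, f ω * I ω ∂μ := by
    intro s hs _
    have hsm : MeasurableSet s := hm' s hs
    -- step 1: ∫_s g = ∫_s f·c
    have step1 : ∫ ω in s, g ω ∂μ = ∫ ω in s, f ω * c ω ∂μ := by
      calc ∫ ω in s, g ω ∂μ
          = ∫ ω in s, (c * μ[f | m']) ω ∂μ := by
            refine integral_congr_ae (ae_restrict_of_ae (Filter.Eventually.of_forall fun ω => ?_))
            simp [hg, mul_comm]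
        _ = ∫ ω in s, (μ[c * f | m']) ω ∂μ := by
            refine integral_congr_ae (ae_restrict_of_ae ?_)
            filter_upwards [hpull] with ω h
            rw [h]
        _ = ∫ ω in s, (c * f) ω ∂μ := setIntegral_condExp hm' hcf_i hs
        _ = ∫ ω in s, f ω * c ω ∂μ := by
            refine integral_congr_ae (ae_restrict_of_ae (Filter.Eventually.of_forall fun ω => ?_))
            simp [mul_comm]
    -- step 2: ∫_s f·I − ∫_s f·c = ∫ f · G where G = 1_s(I − c), which vanishes
    have hG_asm : AEStronglyMeasurable (s.indicator (fun ω => I ω - c ω)) μ := by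
      refine AEStronglyMeasurable.indicator ?_ hsm
      exact (hIi.aestronglyMeasurable.sub hc_asm)
    have hG_bd : ∀ᵐ ω ∂μ, ‖s.indicator (fun ω => I ω - c ω) ω‖ ≤ 2 := by
      filter_upwards [hc_bd] with ω hω
      by_cases hs' : ω ∈ s
      · rw [Set.indicator_of_mem hs']
        calc ‖I ω - c ω‖ ≤ ‖I ω‖ + ‖c ω‖ := norm_sub_le _ _
        _ ≤ 1 + 1 := add_le_add (hI_bd ω) hω
        _ = 2 := by norm_num
      · rw [Set.indicator_of_notMem hs']
        simp
    have hvanish : ∫ ω, f ω * s.indicator (fun ω => I ω - c ω) ω ∂μ = 0 :=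
      integral_mul_eq_zero_of_forall_setIntegral_eq_zero hm₁ μ _ hG_asm 2 hG_bd
        (hzero s hs) hf hfi
    have hexpand : ∫ ω, f ω * s.indicator (fun ω => I ω - c ω) ω ∂μ
        = ∫ ω in s, f ω * I ω ∂μ - ∫ ω in s, f ω * c ω ∂μ := by
      have e : (fun ω => f ω * s.indicator (fun ω => I ω - c ω) ω)
          = s.indicator (fun ω => f ω * I ω - f ω * c ω) := by
        funext ω
        by_cases hs' : ω ∈ s <;> simp [hs', mul_sub]
      rw [e, integral_indicator hsm]
      have hfc_i : Integrable (fun ω => f ω * c ω) μ := by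
        have := Integrable.bdd_mul (c := 1) hfi hc_asm hc_bd
        simpa [mul_comm] using this
      exact integral_sub (hfI.integrableOn) (hfc_i.integrableOn)
    rw [step1]
    rw [hexpand] at hvanish
    linarith
  have := ae_eq_condExp_of_forall_setIntegral_eq hm' hfI
    (fun s _ _ => hg_int.integrableOn) hg_eq hgm
  exact this.symm

/-- Under unconfoundedness `(Y₀, Y₁) ⟂⟂ T ∣ X` for a binary treatment `T ∈ {0, 1}` and
observed outcome `Y = T·Y₁ + (1 − T)·Y₀`, one has almost surely
`E[Y·T ∣ 𝓖] = E[Y₁ ∣ 𝓖] · E[T ∣ 𝓖]` and `E[Y·(1−T) ∣ 𝓖] = E[Y₀ ∣ 𝓖] · E[1−T ∣ 𝓖]`,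
where `𝓖` is the σ-algebra generated by `X`. -/
theorem unconfoundedness_identifies_condexp
    {Ω : Type*} [MeasurableSpace Ω] [StandardBorelSpace Ω]
    (P : Measure Ω) [IsProbabilityMeasure P]
    {𝒳 : Type*} [MeasurableSpace 𝒳]
    (X : Ω → 𝒳) (hX : Measurable X)
    (Y₀ Y₁ T : Ω → ℝ)
    (hY₀m : Measurable Y₀) (hY₁m : Measurable Y₁) (hTm : Measurable T)
    (hY₀i : Integrable Y₀ P) (hY₁i : Integrable Y₁ P)
    (hT01 : ∀ ω, T ω = 0 ∨ T ω = 1)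
    (Y : Ω → ℝ) (hY : ∀ ω, Y ω = T ω * Y₁ ω + (1 - T ω) * Y₀ ω)
    (hYi : Integrable Y P)
    (hYTi : Integrable (fun ω => Y ω * T ω) P)
    (hY₁Ti : Integrable (fun ω => Y₁ ω * T ω) P)
    (hunconf : CondIndep (MeasurableSpace.comap X inferInstance)
      (MeasurableSpace.comap (fun ω => (Y₀ ω, Y₁ ω)) inferInstance)
      (MeasurableSpace.comap T inferInstance)
      hX.comap_le P) :
    (∀ᵐ ω ∂P,
      (P[fun ω' => Y ω' * T ω' | MeasurableSpace.comap X inferInstance]) ω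
        = (P[Y₁ | MeasurableSpace.comap X inferInstance]) ω
          * (P[T | MeasurableSpace.comap X inferInstance]) ω) ∧
    (∀ᵐ ω ∂P,
      (P[fun ω' => Y ω' * (1 - T ω') | MeasurableSpace.comap X inferInstance]) ω
        = (P[Y₀ | MeasurableSpace.comap X inferInstance]) ω
          * (P[fun ω' => 1 - T ω' | MeasurableSpace.comap X inferInstance]) ω) := by
  have hm₁ := (hY₀m.prodMk hY₁m).comap_le
  have hm₂ := hTm.comap_le
  set m' := MeasurableSpace.comap X inferInstance with hm'def
  set m₁ := MeasurableSpace.comap (fun ω => (Y₀ ω, Y₁ ω)) inferInstance with hm₁def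
  set m₂ := MeasurableSpace.comap T inferInstance with hm₂def
  have hpair : Measurable[m₁] (fun ω => (Y₀ ω, Y₁ ω)) := measurable_iff_comap_le.mpr le_rfl
  have hY₁sm : StronglyMeasurable[m₁] Y₁ := (measurable_snd.comp hpair).stronglyMeasurable
  have hY₀sm : StronglyMeasurable[m₁] Y₀ := (measurable_fst.comp hpair).stronglyMeasurable
  set A : Set Ω := T ⁻¹' {1} with hAdef
  have hA : MeasurableSet[m₂] A := ⟨{1}, measurableSet_singleton 1, rfl⟩
  have hA' : MeasurableSet[m₂] Aᶜ := hA.compl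
  have hIT : A.indicator (fun _ => (1:ℝ)) = T := by
    funext ω
    rcases hT01 ω with h | h
    · have hω : ω ∉ A := by simp [hAdef, h]
      simp [Set.indicator_of_notMem hω, h]
    · have hω : ω ∈ A := by simp [hAdef, h]
      simp [Set.indicator_of_mem hω, h]
  have hIT' : Aᶜ.indicator (fun _ => (1:ℝ)) = fun ω => 1 - T ω := by
    funext ω
    rcases hT01 ω with h | h
    · have hω : ω ∈ Aᶜ := by simp [hAdef, h]
      simp [Set.indicator_of_mem hω, h]
    · have hω : ω ∉ Aᶜ := by simp [hAdef, h]
      simp [Set.indicator_of_notMem hω, h]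
  constructor
  · -- first identity
    have hfun1 : (fun ω' => Y ω' * T ω') = fun ω => Y₁ ω * A.indicator (fun _ => (1:ℝ)) ω := by
      funext ω
      rw [hIT]
      rcases hT01 ω with h | h <;> simp [hY ω, h] <;> ring
    have key := condexp_mul_indicator_of_condIndep P hX.comap_le hm₁ hm₂ hunconf
      hY₁sm hY₁i hA
    rw [hIT] at key
    rw [hfun1, hIT]
    exact key
  · -- second identity
    have hfun2 : (fun ω' => Y ω' * (1 - T ω'))
        = fun ω => Y₀ ω * Aᶜ.indicator (fun _ => (1:ℝ)) ω := by
      funext ω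
      rw [hIT']
      rcases hT01 ω with h | h <;> simp [hY ω, h] <;> ring
    have key := condexp_mul_indicator_of_condIndep P hX.comap_le hm₁ hm₂ hunconf
      hY₀sm hY₀i hA'
    rw [hIT'] at key
    rw [hfun2, hIT']
    exact key
end

section
/- Fix a ∈ ℝ and σ > 0 with (a, σ) ≠ (0, 0), and let v = a² + σ². Let μ be the law on ℝ × ℝ of (T, a·T + ε) where T and ε are independent real random variables with T ∼ N(0, 1) and ε ∼ N(0, σ²). Let ν be the law on ℝ × ℝ of (b·Y + ε′, Y) where Y and ε′ are independent with Y ∼ N(0, v), ε′ ∼ N(0, σ²/v), and b = a / v. Then μ = ν as measures on ℝ × ℝ. Concretely, the pushforward of the product measure (gaussianReal 0 1) ×ₘ (gaussianReal 0 σ²) under (t, e) ↦ (t, a*t + e) equals the pushforward of (gaussianReal 0 v) ×ₘ (gaussianReal 0 (σ²/v)) under (y, e) ↦ (a/v * y + e, y). (Hence the causal direction of a linear-Gaussian structural causal model on two variables is not identifiable from the observational distribution: the forward model T → Y and a suitable reverse model Y → T induce exactly the same joint law.) -/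
open MeasureTheory ProbabilityTheory Real
open scoped ENNReal NNReal

/-- The shear `(x, y) ↦ (x, c·x + y)` as a measurable equivalence of `ℝ × ℝ`. -/
noncomputable def shearEquiv (c : ℝ) : (ℝ × ℝ) ≃ᵐ (ℝ × ℝ) where
  toFun := fun p => (p.1, c * p.1 + p.2)
  invFun := fun q => (q.1, q.2 - c * q.1)
  left_inv := fun p => by simp
  right_inv := fun q => by simp
  measurable_toFun := by
    exact measurable_fst.prodMk ((measurable_fst.const_mul c).add measurable_snd)
  measurable_invFun := by
    exact measurable_fst.prodMk (measurable_snd.sub (measurable_fst.const_mul c))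

lemma shearEquiv_measurePreserving (c : ℝ) :
    MeasurePreserving (shearEquiv c)
      ((volume : Measure ℝ).prod volume) ((volume : Measure ℝ).prod volume) := by
  have := MeasurePreserving.skew_product (β := ℝ) (f := id)
    (MeasurePreserving.id (volume : Measure ℝ))
    (g := fun x y => c * x + y)
    (μc := (volume : Measure ℝ)) (μd := (volume : Measure ℝ))
    (by exact (measurable_fst.const_mul c).add measurable_snd)
    (Filter.Eventually.of_forall fun x => (measurePreserving_add_left volume (c * x)).map_eq)
  exact this

lemma map_withDensity_equiv {α β : Type*} [MeasurableSpace α] [MeasurableSpace β]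
    (e : α ≃ᵐ β) (μ : Measure α) {g : β → ℝ≥0∞} (hg : Measurable g) :
    (μ.withDensity (fun x => g (e x))).map e = (μ.map e).withDensity g := by
  ext s hs
  rw [Measure.map_apply e.measurable hs, withDensity_apply _ (e.measurable hs),
    withDensity_apply _ hs, setLIntegral_map hs hg e.measurable]

lemma gaussian_prod_eq_withDensity (m₁ m₂ : ℝ) (v₁ v₂ : NNReal)
    (h₁ : v₁ ≠ 0) (h₂ : v₂ ≠ 0) :
    (gaussianReal m₁ v₁).prod (gaussianReal m₂ v₂)
      = ((volume : Measure ℝ).prod volume).withDensity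
          (fun p => gaussianPDF m₁ v₁ p.1 * gaussianPDF m₂ v₂ p.2) := by
  apply Measure.prod_eq
  intro s t hs ht
  rw [withDensity_apply _ (hs.prod ht), ← Measure.prod_restrict,
    lintegral_prod_mul ((measurable_gaussianPDF m₁ v₁).aemeasurable)
      ((measurable_gaussianPDF m₂ v₂).aemeasurable),
    gaussianReal_of_var_ne_zero m₁ h₁, gaussianReal_of_var_ne_zero m₂ h₂,
    withDensity_apply _ hs, withDensity_apply _ ht]

lemma gaussian_density_identity (a : ℝ) (σ : NNReal) (hσ : 0 < σ) (x y : ℝ) :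
    gaussianPDFReal 0 1 x * gaussianPDFReal 0 (σ ^ 2) (y - a * x)
      = gaussianPDFReal 0 ((a ^ 2).toNNReal + σ ^ 2) y *
        gaussianPDFReal 0 (σ ^ 2 / ((a ^ 2).toNNReal + σ ^ 2))
          (x - a / (((a ^ 2).toNNReal + σ ^ 2 : NNReal) : ℝ) * y) := by
  have hσr : (0 : ℝ) < (σ : ℝ) := hσ
  have hσ2 : (0 : ℝ) < ((σ ^ 2 : NNReal) : ℝ) := by positivity
  set vr : ℝ := a ^ 2 + (σ : ℝ) ^ 2 with hvr
  have hvrpos : (0 : ℝ) < vr := by positivity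
  have hv : (((a ^ 2).toNNReal + σ ^ 2 : NNReal) : ℝ) = vr := by
    push_cast
    rw [Real.coe_toNNReal _ (sq_nonneg a)]
  have hvne : ((a ^ 2).toNNReal + σ ^ 2 : NNReal) ≠ 0 := by
    intro h
    have := congrArg (fun z : NNReal => (z : ℝ)) h
    simp [hv] at this
    linarith
  have hv2 : ((σ ^ 2 / ((a ^ 2).toNNReal + σ ^ 2) : NNReal) : ℝ) = (σ : ℝ) ^ 2 / vr := by
    rw [NNReal.coe_div, hv]
    push_cast
    ring
  simp only [gaussianPDFReal, hv, hv2, NNReal.coe_one, NNReal.coe_pow, sub_zero]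
  have hπ : (0 : ℝ) < 2 * π := by positivity
  -- constants
  have hconst : (√(2 * π * 1))⁻¹ * (√(2 * π * (σ : ℝ) ^ 2))⁻¹
      = (√(2 * π * vr))⁻¹ * (√(2 * π * ((σ : ℝ) ^ 2 / vr)))⁻¹ := by
    rw [← mul_inv, ← mul_inv, ← Real.sqrt_mul (by positivity), ← Real.sqrt_mul (by positivity)]
    congr 1
    congr 1
    field_simp
  have hexp : rexp (-x ^ 2 / (2 * 1)) * rexp (-(y - a * x) ^ 2 / (2 * (σ : ℝ) ^ 2))
      = rexp (-y ^ 2 / (2 * vr)) *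
        rexp (-(x - a / vr * y) ^ 2 / (2 * ((σ : ℝ) ^ 2 / vr))) := by
    rw [← Real.exp_add, ← Real.exp_add]
    congr 1
    have hσ2ne : ((σ : ℝ) ^ 2) ≠ 0 := ne_of_gt (by positivity)
    have hvrne : vr ≠ 0 := ne_of_gt hvrpos
    field_simp
    ring
  calc (√(2 * π * 1))⁻¹ * rexp (-x ^ 2 / (2 * 1)) *
        ((√(2 * π * (σ : ℝ) ^ 2))⁻¹ * rexp (-(y - a * x) ^ 2 / (2 * (σ : ℝ) ^ 2)))
      = ((√(2 * π * 1))⁻¹ * (√(2 * π * (σ : ℝ) ^ 2))⁻¹) *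
        (rexp (-x ^ 2 / (2 * 1)) * rexp (-(y - a * x) ^ 2 / (2 * (σ : ℝ) ^ 2))) := by ring
    _ = ((√(2 * π * vr))⁻¹ * (√(2 * π * ((σ : ℝ) ^ 2 / vr)))⁻¹) *
        (rexp (-y ^ 2 / (2 * vr)) *
          rexp (-(x - a / vr * y) ^ 2 / (2 * ((σ : ℝ) ^ 2 / vr)))) := by rw [hconst, hexp]
    _ = _ := by ring

set_option maxHeartbeats 1000000 in
/-- Non-identifiability of the causal direction in a bivariate linear-Gaussian SCM:
the forward model `T ∼ N(0,1)`, `Y = a·T + ε`, `ε ∼ N(0, σ²)` and the reverse model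
`Y ∼ N(0, v)`, `T = (a/v)·Y + ε′`, `ε′ ∼ N(0, σ²/v)` with `v = a² + σ²` induce the
same observational joint law on `ℝ × ℝ`. -/
theorem linear_gaussian_not_identifiable (a : ℝ) (σ : NNReal) (hσ : 0 < σ) :
    Measure.map (fun p : ℝ × ℝ => (p.1, a * p.1 + p.2))
      ((gaussianReal 0 1).prod (gaussianReal 0 (σ ^ 2)))
    = Measure.map
        (fun p : ℝ × ℝ =>
          (a / (((a ^ 2).toNNReal + σ ^ 2 : NNReal) : ℝ) * p.1 + p.2, p.1))
        ((gaussianReal 0 ((a ^ 2).toNNReal + σ ^ 2)).prod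
          (gaussianReal 0 (σ ^ 2 / ((a ^ 2).toNNReal + σ ^ 2)))) := by
  set v : NNReal := (a ^ 2).toNNReal + σ ^ 2 with hvdef
  have hσ2 : (σ ^ 2 : NNReal) ≠ 0 := by
    simp only [ne_eq, pow_eq_zero_iff, OfNat.ofNat_ne_zero, not_false_eq_true]
    exact fun h => absurd h hσ.ne'
  have hvne : v ≠ 0 := by
    intro h
    have : (σ ^ 2 : NNReal) ≤ v := le_add_self
    rw [h] at this
    exact hσ2 (le_antisymm this zero_le)
  have hv2ne : (σ ^ 2 / v : NNReal) ≠ 0 := by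
    rw [ne_eq, div_eq_zero_iff]
    push_neg
    exact ⟨hσ2, hvne⟩
  -- density functions
  set h₁ : ℝ × ℝ → ℝ≥0∞ := fun p => gaussianPDF 0 1 p.1 * gaussianPDF 0 (σ ^ 2) p.2 with hh₁
  set h₂ : ℝ × ℝ → ℝ≥0∞ := fun p => gaussianPDF 0 v p.1 * gaussianPDF 0 (σ ^ 2 / v) p.2
    with hh₂
  set c : ℝ := a / (v : ℝ) with hc
  -- the two maps, as measurable equivalences
  have hF : (fun p : ℝ × ℝ => (p.1, a * p.1 + p.2)) = ⇑(shearEquiv a) := rfl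
  have hG : (fun p : ℝ × ℝ => (c * p.1 + p.2, p.1))
      = ⇑((shearEquiv c).trans (MeasurableEquiv.prodComm (α := ℝ) (β := ℝ))) := rfl
  have hmeas₁ : Measurable fun q : ℝ × ℝ => h₁ ((shearEquiv a).symm q) := by
    apply Measurable.fun_mul
    · exact (measurable_gaussianPDF 0 1).comp measurable_fst
    · exact (measurable_gaussianPDF 0 (σ ^ 2)).comp
        (measurable_snd.sub (measurable_fst.const_mul a))
  have hmeas₂ : Measurable fun q : ℝ × ℝ =>
      h₂ (((shearEquiv c).trans (MeasurableEquiv.prodComm (α := ℝ) (β := ℝ))).symm q) := by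
    apply Measurable.fun_mul
    · exact (measurable_gaussianPDF 0 v).comp measurable_snd
    · exact (measurable_gaussianPDF 0 (σ ^ 2 / v)).comp
        (measurable_fst.sub (measurable_snd.const_mul c))
  have key : ∀ q : ℝ × ℝ, h₁ ((shearEquiv a).symm q)
      = h₂ (((shearEquiv c).trans (MeasurableEquiv.prodComm (α := ℝ) (β := ℝ))).symm q) := by
    rintro ⟨x, y⟩
    simp only [hh₁, hh₂, shearEquiv, MeasurableEquiv.trans, MeasurableEquiv.prodComm,
      MeasurableEquiv.symm, MeasurableEquiv.coe_mk, Equiv.coe_fn_mk, Equiv.prodComm,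
      Equiv.trans, Equiv.symm, gaussianPDF]
    rw [← ENNReal.ofReal_mul (gaussianPDFReal_nonneg _ _ _),
      ← ENNReal.ofReal_mul (gaussianPDFReal_nonneg _ _ _)]
    exact congrArg ENNReal.ofReal (gaussian_density_identity a σ hσ x y)
  -- measure preserving facts
  have mpF := shearEquiv_measurePreserving a
  have mpG : MeasurePreserving ((shearEquiv c).trans (MeasurableEquiv.prodComm (α := ℝ) (β := ℝ)))
      ((volume : Measure ℝ).prod volume) ((volume : Measure ℝ).prod volume) :=
    (Measure.measurePreserving_swap).comp (shearEquiv_measurePreserving c)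
  calc Measure.map (fun p : ℝ × ℝ => (p.1, a * p.1 + p.2))
        ((gaussianReal 0 1).prod (gaussianReal 0 (σ ^ 2)))
      = Measure.map (shearEquiv a)
          (((volume : Measure ℝ).prod volume).withDensity
            (fun p => h₁ ((shearEquiv a).symm (shearEquiv a p)))) := by
        rw [hF, gaussian_prod_eq_withDensity 0 0 1 (σ ^ 2) one_ne_zero hσ2]
        exact congrArg _ (congrArg _ (funext fun p => by
          rw [MeasurableEquiv.symm_apply_apply]))
    _ = (Measure.map (shearEquiv a) ((volume : Measure ℝ).prod volume)).withDensity
          (fun q => h₁ ((shearEquiv a).symm q)) :=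
        map_withDensity_equiv (shearEquiv a) _
          (g := fun q => h₁ ((shearEquiv a).symm q)) hmeas₁
    _ = ((volume : Measure ℝ).prod volume).withDensity
          (fun q => h₁ ((shearEquiv a).symm q)) := by rw [mpF.map_eq]
    _ = ((volume : Measure ℝ).prod volume).withDensity
          (fun q => h₂ (((shearEquiv c).trans (MeasurableEquiv.prodComm (α := ℝ) (β := ℝ))).symm q)) :=
        congrArg _ (funext key)
    _ = (Measure.map ((shearEquiv c).trans (MeasurableEquiv.prodComm (α := ℝ) (β := ℝ)))
          ((volume : Measure ℝ).prod volume)).withDensity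
          (fun q => h₂ (((shearEquiv c).trans (MeasurableEquiv.prodComm (α := ℝ) (β := ℝ))).symm q)) := by
        rw [mpG.map_eq]
    _ = Measure.map ((shearEquiv c).trans (MeasurableEquiv.prodComm (α := ℝ) (β := ℝ)))
          (((volume : Measure ℝ).prod volume).withDensity
            (fun p => h₂ (((shearEquiv c).trans (MeasurableEquiv.prodComm (α := ℝ) (β := ℝ))).symm
              (((shearEquiv c).trans (MeasurableEquiv.prodComm (α := ℝ) (β := ℝ))) p)))) :=
        (map_withDensity_equiv ((shearEquiv c).trans (MeasurableEquiv.prodComm (α := ℝ) (β := ℝ))) _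
          (g := fun q => h₂ (((shearEquiv c).trans (MeasurableEquiv.prodComm (α := ℝ) (β := ℝ))).symm q))
          hmeas₂).symm
    _ = Measure.map
          (fun p : ℝ × ℝ => (a / (v : ℝ) * p.1 + p.2, p.1))
          ((gaussianReal 0 v).prod (gaussianReal 0 (σ ^ 2 / v))) := by
        rw [gaussian_prod_eq_withDensity 0 0 v (σ ^ 2 / v) hvne hv2ne, hG]
        exact congrArg _ (congrArg _ (funext fun p => by
          rw [MeasurableEquiv.symm_apply_apply]))
end
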